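/- Let d ∈ ℕ and K ∈ L²(ℝ^d × ℝ^d; ℂ). Then the integral operator T_K is a well-defined bounded linear operator on L²(ℝ^d; ℂ), and for every Hilbert basis (e_i)_{i∈I} of L²(ℝ^d; ℂ), the family (‖T_K e_i‖²)_{i∈I} is summable with Σ_{i∈I} ‖T_K e_i‖² = ∫_{ℝ^d} ∫_{ℝ^d} |K(x,y)|² dx dy. (This is the characterization used by the paper: an operator given by an L² kernel is Hilbert–Schmidt, with Hilbert–Schmidt norm equal to the L² norm of its kernel.) -/

import Mathlib

/-!
For almost every `x` the row `K (x, ·)` is square integrable (Fubini), and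
`(T f) x = ⟪conj K (x, ·), f⟫`. Cauchy–Schwarz for each `x`, integrated over `x`, gives
`‖T f‖ ≤ ‖K‖₂ ‖f‖`. For a Hilbert basis `(e i)`, which is countable because `L²` is separable,
monotone convergence and Parseval give
`∑ ‖T (e i)‖² = ∫ ∑ |⟪e i, conj K (x, ·)⟫|² dx = ∫ ‖K (x, ·)‖² dx = ‖K‖₂²` by Tonelli.
-/

open MeasureTheory ENNReal
open scoped InnerProductSpace

section HilbertSpace

variable {ι 𝕜 E : Type*} [RCLike 𝕜] [NormedAddCommGroup E] [InnerProductSpace 𝕜 E]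

theorem Orthonormal.countable [TopologicalSpace.SeparableSpace E] {e : ι → E}
    (he : Orthonormal 𝕜 e) : Countable ι := by
  refine Pairwise.countable_of_isOpen_disjoint (s := fun i => Metric.ball (e i) (1 / 2))
    (fun i j hij => Metric.ball_disjoint_ball ?_) (fun _ => Metric.isOpen_ball)
    (fun i => Metric.nonempty_ball.2 one_half_pos)
  have hdist : dist (e i) (e j) ^ 2 = 2 := by
    rw [dist_eq_norm, @norm_sub_sq 𝕜, he.1 i, he.1 j, he.2 hij]
    norm_num
  nlinarith [dist_nonneg (x := e i) (y := e j)]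

theorem HilbertBasis.hasSum_norm_inner_sq (b : HilbertBasis ι 𝕜 E) (v : E) :
    HasSum (fun i => ‖⟪b i, v⟫_𝕜‖ ^ 2) (‖v‖ ^ 2) := by
  have h := b.hasSum_inner_mul_inner v v
  rw [inner_self_eq_norm_sq_to_K, ← RCLike.ofReal_pow] at h
  refine (RCLike.hasSum_ofReal 𝕜).1 (h.congr_fun fun i => ?_)
  rw [← inner_conj_symm v, RCLike.conj_mul, RCLike.ofReal_pow]

theorem HilbertBasis.tsum_enorm_inner_sq (b : HilbertBasis ι 𝕜 E) (v : E) :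
    ∑' i, ‖⟪b i, v⟫_𝕜‖ₑ ^ 2 = ‖v‖ₑ ^ 2 := by
  have h := b.hasSum_norm_inner_sq v
  simp only [← ofReal_norm, ← ofReal_pow (norm_nonneg _)]
  rw [← ENNReal.ofReal_tsum_of_nonneg (fun _ => by positivity) h.summable, h.tsum_eq]

end HilbertSpace

namespace MeasureTheory

variable {α E : Type*} [MeasurableSpace α] [NormedAddCommGroup E] {μ : Measure α}

theorem eLpNorm_two_sq (f : α → E) : eLpNorm f 2 μ ^ 2 = ∫⁻ x, ‖f x‖ₑ ^ 2 ∂μ := by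
  simpa using eLpNorm_nnreal_pow_eq_lintegral (f := f) (μ := μ) (p := 2) two_ne_zero

theorem integral_norm_sq_eq_toReal_eLpNorm_two_sq {f : α → E} (hf : AEStronglyMeasurable f μ) :
    ∫ x, ‖f x‖ ^ 2 ∂μ = (eLpNorm f 2 μ ^ 2).toReal := by
  rw [eLpNorm_two_sq,
    ← integral_toReal (hf.enorm.pow_const 2) (ae_of_all _ fun _ => by finiteness)]
  simp

end MeasureTheory

section IntegralOperator

variable {α β 𝕜 : Type*} [RCLike 𝕜] [MeasurableSpace β] {ν : Measure β}

theorem MeasureTheory.MemLp.prod_right_ae [MeasurableSpace α] {μ : Measure α} [SFinite μ]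
    [SFinite ν] {E : Type*} [NormedAddCommGroup E] {p : ℝ≥0∞} {f : α × β → E}
    (hf : MemLp f p (μ.prod ν)) (hp0 : p ≠ 0) (hp : p ≠ ∞) :
    ∀ᵐ x ∂μ, MemLp (fun y => f (x, y)) p ν := by
  filter_upwards [hf.aestronglyMeasurable.prodMk_left,
    (hf.integrable_norm_rpow hp0 hp).prod_right_ae] with x hxm hxi
  exact (integrable_norm_rpow_iff hxm hp0 hp).1 hxi

open Classical in
/-- The row `y ↦ K (x, y)`, conjugated so that `∫ y, K (x, y) * f y ∂ν = ⟪kernelRow ν K x, f⟫`;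
junk value `0` when the row is not square integrable. -/
noncomputable def kernelRow (ν : Measure β) (K : α × β → 𝕜) (x : α) : Lp 𝕜 2 ν :=
  if h : MemLp (fun y => K (x, y)) 2 ν then h.star.toLp else 0

variable {K : α × β → 𝕜} {x : α}

theorem inner_kernelRow (hx : MemLp (fun y => K (x, y)) 2 ν) (f : Lp 𝕜 2 ν) :
    ⟪kernelRow ν K x, f⟫_𝕜 = ∫ y, K (x, y) * f y ∂ν := by
  rw [kernelRow, dif_pos hx, L2.inner_def]
  refine integral_congr_ae ?_
  filter_upwards [hx.star.coeFn_toLp] with y hy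
  rw [hy, RCLike.inner_apply]
  simp [mul_comm]

theorem enorm_kernelRow (hx : MemLp (fun y => K (x, y)) 2 ν) :
    ‖kernelRow ν K x‖ₑ = eLpNorm (fun y => K (x, y)) 2 ν := by
  rw [kernelRow, dif_pos hx, Lp.enorm_def, eLpNorm_congr_ae hx.star.coeFn_toLp, eLpNorm_star]

variable [MeasurableSpace α] {μ : Measure α} [SFinite μ] [SFinite ν]

theorem lintegral_enorm_kernelRow_sq (hK : MemLp K 2 (μ.prod ν)) :
    ∫⁻ x, ‖kernelRow ν K x‖ₑ ^ 2 ∂μ = eLpNorm K 2 (μ.prod ν) ^ 2 := by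
  calc ∫⁻ x, ‖kernelRow ν K x‖ₑ ^ 2 ∂μ = ∫⁻ x, ∫⁻ y, ‖K (x, y)‖ₑ ^ 2 ∂ν ∂μ := by
        refine lintegral_congr_ae ?_
        filter_upwards [hK.prod_right_ae two_ne_zero ofNat_ne_top] with x hx
        rw [enorm_kernelRow hx, eLpNorm_two_sq]
    _ = eLpNorm K 2 (μ.prod ν) ^ 2 := by
        rw [eLpNorm_two_sq, lintegral_prod _ (hK.aestronglyMeasurable.enorm.pow_const 2)]

theorem inner_kernelRow_ae_eq (hK : MemLp K 2 (μ.prod ν)) (f : Lp 𝕜 2 ν) :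
    (fun x => ⟪kernelRow ν K x, f⟫_𝕜) =ᵐ[μ] fun x => ∫ y, K (x, y) * f y ∂ν := by
  filter_upwards [hK.prod_right_ae two_ne_zero ofNat_ne_top] with x hx
  exact inner_kernelRow hx f

theorem lintegral_enorm_inner_kernelRow_sq_le (hK : MemLp K 2 (μ.prod ν)) (f : Lp 𝕜 2 ν) :
    ∫⁻ x, ‖⟪kernelRow ν K x, f⟫_𝕜‖ₑ ^ 2 ∂μ ≤ (eLpNorm K 2 (μ.prod ν) * ‖f‖ₑ) ^ 2 := by
  calc ∫⁻ x, ‖⟪kernelRow ν K x, f⟫_𝕜‖ₑ ^ 2 ∂μ ≤ ∫⁻ x, ‖kernelRow ν K x‖ₑ ^ 2 * ‖f‖ₑ ^ 2 ∂μ :=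
        lintegral_mono fun x => by
          rw [← mul_pow]; gcongr; exact ENNReal.coe_le_coe.2 (nnnorm_inner_le_nnnorm _ _)
    _ = (eLpNorm K 2 (μ.prod ν) * ‖f‖ₑ) ^ 2 := by
        rw [lintegral_mul_const' _ _ (by finiteness), lintegral_enorm_kernelRow_sq hK, mul_pow]

theorem memLp_inner_kernelRow (hK : MemLp K 2 (μ.prod ν)) (f : Lp 𝕜 2 ν) :
    MemLp (fun x => ⟪kernelRow ν K x, f⟫_𝕜) 2 μ := by
  refine ⟨?_, ?_⟩
  · exact (hK.aestronglyMeasurable.mul (Lp.aestronglyMeasurable f).comp_snd).integral_prod_right'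
      |>.congr (inner_kernelRow_ae_eq hK f).symm
  · rw [← ENNReal.pow_lt_pow_left_iff two_ne_zero, eLpNorm_two_sq]
    refine (lintegral_enorm_inner_kernelRow_sq_le hK f).trans_lt ?_
    rw [top_pow two_ne_zero]
    exact pow_lt_top (mul_lt_top hK.eLpNorm_lt_top enorm_lt_top)

theorem enorm_toLp_inner_kernelRow_le (hK : MemLp K 2 (μ.prod ν)) (f : Lp 𝕜 2 ν) :
    ‖(memLp_inner_kernelRow hK f).toLp‖ₑ ≤ eLpNorm K 2 (μ.prod ν) * ‖f‖ₑ := by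
  rw [Lp.enorm_toLp, ← ENNReal.pow_le_pow_left_iff two_ne_zero, eLpNorm_two_sq]
  exact lintegral_enorm_inner_kernelRow_sq_le hK f

noncomputable def integralOperator (hK : MemLp K 2 (μ.prod ν)) : Lp 𝕜 2 ν →L[𝕜] Lp 𝕜 2 μ :=
  LinearMap.mkContinuous
    { toFun := fun f => (memLp_inner_kernelRow hK f).toLp
      map_add' := fun f g => by simp only [inner_add_right]; exact MemLp.toLp_add _ _
      map_smul' := fun c f => by simp only [inner_smul_right]; exact MemLp.toLp_const_smul c _ }
    (eLpNorm K 2 (μ.prod ν)).toReal fun f => by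
      simpa using ENNReal.toReal_mono (by finiteness) (enorm_toLp_inner_kernelRow_le hK f)

theorem integralOperator_apply (hK : MemLp K 2 (μ.prod ν)) (f : Lp 𝕜 2 ν) :
    integralOperator hK f = (memLp_inner_kernelRow hK f).toLp := rfl

theorem coeFn_integralOperator (hK : MemLp K 2 (μ.prod ν)) (f : Lp 𝕜 2 ν) :
    integralOperator hK f =ᵐ[μ] fun x => ∫ y, K (x, y) * f y ∂ν :=
  (memLp_inner_kernelRow hK f).coeFn_toLp.trans (inner_kernelRow_ae_eq hK f)

theorem enorm_integralOperator_sq (hK : MemLp K 2 (μ.prod ν)) (f : Lp 𝕜 2 ν) :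
    ‖integralOperator hK f‖ₑ ^ 2 = ∫⁻ x, ‖⟪kernelRow ν K x, f⟫_𝕜‖ₑ ^ 2 ∂μ := by
  rw [integralOperator_apply, Lp.enorm_toLp, eLpNorm_two_sq]

theorem tsum_enorm_integralOperator_sq {ι : Type*} [Countable ι] (hK : MemLp K 2 (μ.prod ν))
    (e : HilbertBasis ι 𝕜 (Lp 𝕜 2 ν)) :
    ∑' i, ‖integralOperator hK (e i)‖ₑ ^ 2 = eLpNorm K 2 (μ.prod ν) ^ 2 := by
  calc ∑' i, ‖integralOperator hK (e i)‖ₑ ^ 2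
      = ∫⁻ x, ∑' i, ‖⟪e i, kernelRow ν K x⟫_𝕜‖ₑ ^ 2 ∂μ := by
        simp only [enorm_integralOperator_sq]
        rw [← lintegral_tsum fun i =>
          (memLp_inner_kernelRow hK (e i)).aestronglyMeasurable.enorm.pow_const 2]
        simp only [← inner_conj_symm (e _), RCLike.enorm_conj]
    _ = eLpNorm K 2 (μ.prod ν) ^ 2 := by
        simp only [e.tsum_enorm_inner_sq, lintegral_enorm_kernelRow_sq hK]

theorem hasSum_norm_integralOperator_sq {ι : Type*} [Countable ι] (hK : MemLp K 2 (μ.prod ν))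
    (e : HilbertBasis ι 𝕜 (Lp 𝕜 2 ν)) :
    HasSum (fun i => ‖integralOperator hK (e i)‖ ^ 2) (∫ z, ‖K z‖ ^ 2 ∂(μ.prod ν)) := by
  have hfin : ∑' i, ‖integralOperator hK (e i)‖ₑ ^ 2 ≠ ∞ := by
    rw [tsum_enorm_integralOperator_sq]; exact pow_ne_top hK.eLpNorm_ne_top
  convert ENNReal.hasSum_toReal hfin using 1
  · simp
  · rw [← ENNReal.tsum_toReal_eq (fun _ => by finiteness), tsum_enorm_integralOperator_sq,
      integral_norm_sq_eq_toReal_eLpNorm_two_sq hK.aestronglyMeasurable]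

end IntegralOperator

/-- An `L²` kernel `K` on `ℝ^d × ℝ^d` induces a bounded integral operator `T_K` on
`L²(ℝ^d; ℂ)`, which is Hilbert–Schmidt with Hilbert–Schmidt norm equal to the `L²` norm
of the kernel: for every Hilbert basis `(e_i)`, `Σ_i ‖T_K e_i‖² = ∫∫ |K(x,y)|² dx dy`. -/
theorem l2_kernel_hilbert_schmidt
    (d : ℕ) (K : Lp ℂ 2 (volume : Measure ((Fin d → ℝ) × (Fin d → ℝ)))) :
    ∃ T : Lp ℂ 2 (volume : Measure (Fin d → ℝ)) →L[ℂ] Lp ℂ 2 (volume : Measure (Fin d → ℝ)),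
      (∀ f : Lp ℂ 2 (volume : Measure (Fin d → ℝ)),
        (T f : (Fin d → ℝ) → ℂ) =ᵐ[volume] fun x => ∫ y : Fin d → ℝ, K (x, y) * f y) ∧
      ∀ (ι : Type*) (e : HilbertBasis ι ℂ (Lp ℂ 2 (volume : Measure (Fin d → ℝ)))),
        Summable (fun i : ι => ‖T (e i)‖ ^ 2) ∧
        ∑' i : ι, ‖T (e i)‖ ^ 2 = ∫ x : Fin d → ℝ, ∫ y : Fin d → ℝ, ‖K (x, y)‖ ^ 2 := by
  have hK : MemLp K 2 (volume.prod volume) := Lp.memLp K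
  refine ⟨integralOperator hK, coeFn_integralOperator hK, fun ι e => ?_⟩
  -- lets instance search find `SeparableSpace (Lp ℂ 2 volume)`
  have : Fact ((2 : ℝ≥0∞) ≠ ∞) := ⟨ofNat_ne_top⟩
  have : Countable ι := e.orthonormal.countable
  have hsum := hasSum_norm_integralOperator_sq hK e
  rw [integral_prod _ ((memLp_two_iff_integrable_sq_norm hK.1).1 hK)] at hsum
  exact ⟨hsum.summable, hsum.tsum_eq⟩
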